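/- Let G be a finite multidigraph that is k-out-regular for a positive integer k, with an edge e* = (w*, v*). Then the image of σ ∘ ψ is contained in the image of φ_{𝓛G,e*}; consequently σ induces a homomorphism σ̄ from the cokernel of ψ to the critical group K(𝓛G, e*). Here σ(v) = Σ_{e⁻ = v} e, ψ(v) = Δ_G(v) for v ≠ w* and ψ(w*) = Δ_G(w*) − v*, and φ_{𝓛G,e*}(e) = Δ_{𝓛G}(e) for e ≠ e* and φ_{𝓛G,e*}(e*) = e*. -/

import Mathlib

open Finsupp

/-- The Laplacian of a multidigraph with edge tail map `t` and head map `h`,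
as a linear endomorphism of the free abelian group on the vertices. -/
noncomputable def lap {V E : Type*} [Fintype E] [DecidableEq V] (t h : E → V) :
    (V →₀ ℤ) →ₗ[ℤ] (V →₀ ℤ) :=
  Finsupp.lift (V →₀ ℤ) ℤ V fun v =>
    ∑ e : E, if t e = v then Finsupp.single (h e) (1 : ℤ) - Finsupp.single v 1 else 0

/-- The modified Laplacian `φ_{G,w}` : sends `v ↦ Δ_G v` for `v ≠ w`, and `w ↦ w`. -/
noncomputable def phiMod {V E : Type*} [Fintype E] [DecidableEq V] (t h : E → V) (w : V) :
    (V →₀ ℤ) →ₗ[ℤ] (V →₀ ℤ) :=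
  Finsupp.lift (V →₀ ℤ) ℤ V fun v =>
    if v = w then Finsupp.single w 1 else lap t h (Finsupp.single v 1)

/-- Edges of the directed line graph: pairs `(e, f)` with `e⁺ = f⁻`. -/
def LineEdge {V E : Type*} (t h : E → V) : Type _ := {p : E × E // h p.1 = t p.2}

instance {V E : Type*} [Fintype E] [DecidableEq V] (t h : E → V) :
    Fintype (LineEdge t h) := by
  unfold LineEdge; infer_instance

/-- in-degree of a vertex -/
def indeg {V E : Type*} [Fintype E] [DecidableEq V] (h : E → V) (v : V) : ℕ :=
  (Finset.univ.filter fun e => h e = v).card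

/-- out-degree of a vertex -/
def outdeg {V E : Type*} [Fintype E] [DecidableEq V] (t : E → V) (v : V) : ℕ :=
  (Finset.univ.filter fun e => t e = v).card

/-- The modified target map `τ`: `e ↦ e⁺` for `e ≠ e*`, `e* ↦ 0`. -/
noncomputable def tau {V E : Type*} [DecidableEq E] (h : E → V) (estar : E) :
    (E →₀ ℤ) →ₗ[ℤ] (V →₀ ℤ) :=
  Finsupp.lift (V →₀ ℤ) ℤ E fun e =>
    if e = estar then 0 else Finsupp.single (h e) 1

/-- The map `ρ`: `e ↦ Δ_G(w*) − v* − w* + e⁺` for `e ≠ e*`, `e* ↦ 0`,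
where `w* = t e*` and `v* = h e*`. -/
noncomputable def rho {V E : Type*} [Fintype E] [DecidableEq V] [DecidableEq E]
    (t h : E → V) (estar : E) : (E →₀ ℤ) →ₗ[ℤ] (V →₀ ℤ) :=
  Finsupp.lift (V →₀ ℤ) ℤ E fun e =>
    if e = estar then 0 else
      lap t h (Finsupp.single (t estar) 1) - Finsupp.single (h estar) 1
        - Finsupp.single (t estar) 1 + Finsupp.single (h e) 1

/-- The map `ρ₀`: `v ↦ Δ_G(w*) − v* − w* + v`. -/
noncomputable def rho0 {V E : Type*} [Fintype E] [DecidableEq V] (t h : E → V) (estar : E) :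
    (V →₀ ℤ) →ₗ[ℤ] (V →₀ ℤ) :=
  Finsupp.lift (V →₀ ℤ) ℤ V fun v =>
    lap t h (Finsupp.single (t estar) 1) - Finsupp.single (h estar) 1
      - Finsupp.single (t estar) 1 + Finsupp.single v 1

/-- The map `ψ`: `v ↦ Δ_G v` for `v ≠ w*`, and `w* ↦ Δ_G(w*) − v*`. -/
noncomputable def psi {V E : Type*} [Fintype E] [DecidableEq V] (t h : E → V) (estar : E) :
    (V →₀ ℤ) →ₗ[ℤ] (V →₀ ℤ) :=
  Finsupp.lift (V →₀ ℤ) ℤ V fun v =>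
    if v = t estar then
      lap t h (Finsupp.single (t estar) 1) - Finsupp.single (h estar) 1
    else lap t h (Finsupp.single v 1)

/-- The map `σ`: `v ↦ Σ_{e⁻ = v} e`. -/
noncomputable def sigmaMap {V E : Type*} [Fintype E] [DecidableEq V] (t : E → V) :
    (V →₀ ℤ) →ₗ[ℤ] (E →₀ ℤ) :=
  Finsupp.lift (E →₀ ℤ) ℤ V fun v =>
    ∑ e : E, if t e = v then Finsupp.single e (1 : ℤ) else 0

/-! In a `k`-out-regular graph the line-graph Laplacian is `Δ_𝓛G(e) = σ(e⁺) - k e`, and summing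
over the out-edges of `v` gives the intertwining `σ ∘ Δ_G = Δ_𝓛G ∘ σ`. The maps `ψ` and `φ_{𝓛G,e*}`
differ from the two Laplacians by rank-one corrections at `w*` and `e*`, and with `c = y(w*)` the
element `σ(y) - (k + 1) c e*` is an explicit `φ_{𝓛G,e*}`-preimage of `σ(ψ y)`: its `e*`-coordinate
is `-k c`, and the `e*`-terms cancel. Hence `σ` maps `im ψ` into `im φ_{𝓛G,e*}`. -/

section
variable {V E : Type*} [Fintype E] [DecidableEq V]

theorem sigmaMap_single (t : E → V) (v : V) :
    sigmaMap t (single v 1) = ∑ e ∈ Finset.univ.filter (t · = v), single e 1 := by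
  simp [sigmaMap, Finset.sum_filter]

theorem sigmaMap_apply (t : E → V) (y : V →₀ ℤ) (e : E) : sigmaMap t y e = y (t e) := by
  classical
  induction y using Finsupp.induction_linear with
  | zero => simp
  | add y z hy hz => simp [hy, hz]
  | single v n =>
    rw [← smul_single_one, map_smul, sigmaMap_single]
    simp [Finsupp.single_apply, eq_comm]

theorem lap_single (t h : E → V) (v : V) :
    lap t h (single v 1) = ∑ e ∈ Finset.univ.filter (t · = v), (single (h e) 1 - single v 1) := by
  rw [lap, lift_apply, sum_single_index (by simp), one_smul, Finset.sum_filter]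

theorem phiMod_apply (t h : E → V) (w : V) (x : V →₀ ℤ) :
    phiMod t h w x = lap t h x + x w • (single w 1 - lap t h (single w 1)) := by
  suffices phiMod t h w =
      lap t h + (Finsupp.lapply w).smulRight (single w 1 - lap t h (single w 1)) by
    simp [this]
  refine Finsupp.lhom_ext' fun v => LinearMap.ext_ring ?_
  by_cases hv : v = w
  · subst hv; simp [phiMod]
  · simp [phiMod, hv]

theorem psi_apply (t h : E → V) (estar : E) (y : V →₀ ℤ) :
    psi t h estar y = lap t h y - y (t estar) • single (h estar) 1 := by
  suffices psi t h estar = lap t h - (Finsupp.lapply (t estar)).smulRight (single (h estar) 1) by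
    simp [this]
  refine Finsupp.lhom_ext' fun v => LinearMap.ext_ring ?_
  by_cases hv : v = t estar
  · subst hv; simp [psi]
  · simp [psi, hv]

theorem lap_lineGraph_single [DecidableEq E] (t h : E → V) (e : E) :
    lap (fun p : LineEdge t h => p.1.1) (fun p => p.1.2) (single e 1) =
      sigmaMap t (single (h e) 1) - (outdeg t (h e) : ℤ) • single e 1 := by
  rw [lap_single, sigmaMap_single, outdeg, natCast_zsmul, ← Finset.sum_const,
    ← Finset.sum_sub_distrib]
  refine Finset.sum_bij' (fun p _ => p.1.2) (fun f hf => ⟨(e, f), ?_⟩) ?_ ?_ ?_ ?_ ?_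
  · simpa [eq_comm] using hf
  · rintro ⟨⟨a, b⟩, hab⟩ ha
    obtain rfl : a = e := (Finset.mem_filter.mp ha).2
    simpa [eq_comm] using hab
  · exact fun f _ => Finset.mem_filter.mpr ⟨Finset.mem_univ _, rfl⟩
  · rintro ⟨⟨a, b⟩, hab⟩ ha
    obtain rfl : a = e := (Finset.mem_filter.mp ha).2
    rfl
  · simp
  · simp

theorem sigmaMap_lap [DecidableEq E] {t : E → V} {k : ℕ} (hreg : ∀ v, outdeg t v = k)
    (h : E → V) (y : V →₀ ℤ) :
    sigmaMap t (lap t h y) =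
      lap (fun p : LineEdge t h => p.1.1) (fun p => p.1.2) (sigmaMap t y) := by
  suffices sigmaMap t ∘ₗ lap t h =
      lap (fun p : LineEdge t h => p.1.1) (fun p => p.1.2) ∘ₗ sigmaMap t from
    LinearMap.congr_fun this y
  refine Finsupp.lhom_ext' fun v => LinearMap.ext_ring ?_
  have hσ : ∑ e ∈ Finset.univ.filter (t · = v), (k : ℤ) • single e (1 : ℤ) =
      ∑ e ∈ Finset.univ.filter (t · = v), sigmaMap t (single v 1) := by
    rw [← Finset.smul_sum, ← sigmaMap_single, Finset.sum_const, ← hreg v, outdeg, natCast_zsmul]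
  calc sigmaMap t (lap t h (single v 1))
      = ∑ e ∈ Finset.univ.filter (t · = v),
          (sigmaMap t (single (h e) 1) - sigmaMap t (single v 1)) := by
        simp only [lap_single, map_sum, map_sub]
    _ = ∑ e ∈ Finset.univ.filter (t · = v),
          (sigmaMap t (single (h e) 1) - (k : ℤ) • single e 1) := by
        rw [Finset.sum_sub_distrib, Finset.sum_sub_distrib, hσ]
    _ = lap (fun p : LineEdge t h => p.1.1) (fun p => p.1.2) (sigmaMap t (single v 1)) := by
        simp only [sigmaMap_single t v, map_sum, lap_lineGraph_single, hreg]

theorem sigmaMap_psi [DecidableEq E] {t : E → V} {k : ℕ} (hreg : ∀ v, outdeg t v = k)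
    (h : E → V) (estar : E) (y : V →₀ ℤ) :
    sigmaMap t (psi t h estar y) =
      phiMod (fun p : LineEdge t h => p.1.1) (fun p => p.1.2) estar
        (sigmaMap t y - ((k + 1 : ℤ) * y (t estar)) • single estar 1) := by
  rw [psi_apply, phiMod_apply, map_sub, map_sub, map_smul, map_smul, sigmaMap_lap hreg,
    lap_lineGraph_single, hreg, Finsupp.sub_apply, sigmaMap_apply, Finsupp.smul_apply,
    single_eq_same]
  module

end

theorem sigma_descends_general
    {V E : Type*} [Fintype E] [DecidableEq V] [DecidableEq E]
    (t h : E → V) (estar : E) (k : ℕ)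
    (hreg : ∀ v : V, outdeg t v = k) :
    LinearMap.range (sigmaMap t ∘ₗ psi t h estar) ≤
      LinearMap.range
        (phiMod (fun p : LineEdge t h => p.1.1) (fun p : LineEdge t h => p.1.2) estar) ∧
    ∃ σbar : ((V →₀ ℤ) ⧸ LinearMap.range (psi t h estar)) →ₗ[ℤ]
        ((E →₀ ℤ) ⧸ LinearMap.range
          (phiMod (fun p : LineEdge t h => p.1.1) (fun p : LineEdge t h => p.1.2) estar)),
      ∀ y : V →₀ ℤ,
        σbar (Submodule.Quotient.mk y) = Submodule.Quotient.mk (sigmaMap t y) := by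
  have hrange : LinearMap.range (sigmaMap t ∘ₗ psi t h estar) ≤
      LinearMap.range (phiMod (fun p : LineEdge t h => p.1.1) (fun p => p.1.2) estar) := by
    rintro _ ⟨y, rfl⟩
    exact ⟨_, (sigmaMap_psi hreg h estar y).symm⟩
  refine ⟨hrange, Submodule.mapQ _ _ (sigmaMap t) ?_, fun y => rfl⟩
  rwa [← Submodule.map_le_iff_le_comap, ← LinearMap.range_comp]

/-- for a `k`-out-regular graph, the image of `σ ∘ ψ` is contained
in the image of `φ_{𝓛G,e*}`; consequently `σ` induces a homomorphism
`σ̄ : cok ψ → K(𝓛G, e*)`. -/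
theorem sigma_descends
    {V E : Type*} [Fintype E] [DecidableEq V] [DecidableEq E]
    (t h : E → V) (estar : E) (k : ℕ) (hk : 0 < k)
    (hreg : ∀ v : V, outdeg t v = k) :
    LinearMap.range (sigmaMap t ∘ₗ psi t h estar) ≤
      LinearMap.range
        (phiMod (fun p : LineEdge t h => p.1.1) (fun p : LineEdge t h => p.1.2) estar) ∧
    ∃ σbar : ((V →₀ ℤ) ⧸ LinearMap.range (psi t h estar)) →ₗ[ℤ]
        ((E →₀ ℤ) ⧸ LinearMap.range
          (phiMod (fun p : LineEdge t h => p.1.1) (fun p : LineEdge t h => p.1.2) estar)),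
      ∀ y : V →₀ ℤ,
        σbar (Submodule.Quotient.mk y) = Submodule.Quotient.mk (sigmaMap t y) :=
  sigma_descends_general t h estar k hreg
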